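/- arXiv:2209.06404 — 7 statements merged into one kernel-verified Lean document; each statement's English description precedes it below -/
import Mathlib

section
/- Let m and n be positive integers with n ≥ 2m. Then every layer-rainbow latin cube of order m can be extended to a layer-rainbow latin cube of order n. -/
/-- A layer-rainbow latin cube of order `n`: an `n × n × n` array filled with
`n^2` symbols such that each layer parallel to each face (obtained by fixing
one coordinate) contains every symbol exactly once. -/
def IsLayerRainbowLatinCube {n : ℕ} (L : Fin n × Fin n × Fin n → Fin (n ^ 2)) : Prop :=
  (∀ i : Fin n, Function.Injective fun p : Fin n × Fin n => L (i, p.1, p.2)) ∧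
  (∀ j : Fin n, Function.Injective fun p : Fin n × Fin n => L (p.1, j, p.2)) ∧
  (∀ k : Fin n, Function.Injective fun p : Fin n × Fin n => L (p.1, p.2, k))

/-- `L'` of order `n` extends `L` of order `m ≤ n` via the injection `φ`. -/
def ExtendsVia {m n : ℕ} (h : m ≤ n) (L : Fin m × Fin m × Fin m → Fin (m ^ 2))
    (L' : Fin n × Fin n × Fin n → Fin (n ^ 2)) (φ : Fin (m ^ 2) → Fin (n ^ 2)) : Prop :=
  Function.Injective φ ∧
  ∀ i j k : Fin m, L' (Fin.castLE h i, Fin.castLE h j, Fin.castLE h k) = φ (L (i, j, k))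

namespace LRCubeAux

def bb (r h z : ℕ) : ℕ :=
  if 1 ≤ z ∧ z ≤ h then z - 1
  else if r - h ≤ z then z + 2*h - r
  else 2*h

def Hc (m r z : ℕ) : Prop :=
  (1 ≤ z ∧ z ≤ (r-m)/2) ∨ (r - (r-m)/2 ≤ z ∧ z < r) ∨ ((r-m) % 2 = 1 ∧ z = 0)

instance (m r z : ℕ) : Decidable (Hc m r z) := by unfold Hc; infer_instance

def BBz (m r y z : ℕ) : ℕ :=
  if Hc m r z then m + ((y + m + z + bb r ((r-m)/2) z) % r)
  else if z = 0 then 0 else z - (r-m)/2 - (r-m) % 2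

def BB (m r y x : ℕ) : ℕ := BBz m r y ((x + r - y) % r)

def Lam (m r α t : ℕ) : ℕ :=
  if α < m then
    if t < m then (t + α) % m else m + ((t - m + α) % r)
  else
    if t < m then m + ((t + (α - m)) % r)
    else BB m r (α - m) (t - m)

lemma cancel_modEq {r c a b : ℕ} (ha : a < r) (hb : b < r)
    (h : c + a ≡ c + b [MOD r]) : a = b := by
  have h2 : a ≡ b [MOD r] := Nat.ModEq.add_left_cancel' c h
  simpa [Nat.ModEq, Nat.mod_eq_of_lt ha, Nat.mod_eq_of_lt hb] using h2

lemma zxy {r x y : ℕ} (hx : x < r) (hy : y < r) :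
    ((x + r - y) % r + y) % r = x := by
  rw [Nat.mod_add_mod]
  have e : x + r - y + y = x + r := by omega
  rw [e, Nat.add_mod_right, Nat.mod_eq_of_lt hx]

lemma bb_spec {m r z : ℕ} (hm : 1 ≤ m) (hmr : m ≤ r) (hz : z < r) (hH : Hc m r z) :
    (z + bb r ((r-m)/2) z) % r ≤ r - m - 1 ∧ bb r ((r-m)/2) z ≤ r - m - 1 ∧
    ((1 ≤ z ∧ z ≤ (r-m)/2 ∧ (z + bb r ((r-m)/2) z) % r = 2*z - 1 ∧ bb r ((r-m)/2) z = z - 1)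
     ∨ (r - (r-m)/2 ≤ z ∧ (z + bb r ((r-m)/2) z) % r = 2*z + 2*((r-m)/2) - 2*r ∧ bb r ((r-m)/2) z = z + 2*((r-m)/2) - r)
     ∨ ((r-m) % 2 = 1 ∧ z = 0 ∧ (z + bb r ((r-m)/2) z) % r = 2*((r-m)/2) ∧ bb r ((r-m)/2) z = 2*((r-m)/2))) := by
  unfold Hc at hH
  unfold bb
  split_ifs with h1 h2
  · have e1 : z + (z - 1) = 2*z - 1 := by omega
    rw [e1, Nat.mod_eq_of_lt (by omega)]
    omega
  · have e1 : z + (z + 2*((r-m)/2) - r) = 2*z + 2*((r-m)/2) - r := by omega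
    rw [e1, Nat.mod_eq_sub_mod (by omega),
      show 2*z + 2*((r-m)/2) - r - r = 2*z + 2*((r-m)/2) - 2*r from by omega,
      Nat.mod_eq_of_lt (by omega)]
    omega
  · have hz0 : z = 0 ∧ (r-m) % 2 = 1 := by omega
    rw [hz0.1, Nat.zero_add, Nat.mod_eq_of_lt (by omega)]
    omega


lemma BBz_lt {m r y z : ℕ} (hm : 1 ≤ m) (hz : z < r) : BBz m r y z < m + r := by
  unfold BBz
  split_ifs with h1 h2
  · have := Nat.mod_lt (y + m + z + bb r ((r-m)/2) z) (show 0 < r by omega)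
    omega
  · omega
  · omega

lemma BBz_low_lt {m r y z : ℕ} (hm : 1 ≤ m) (hmr : m ≤ r) (hz : z < r)
    (hH : ¬ Hc m r z) : BBz m r y z < m := by
  unfold BBz
  rw [if_neg hH]
  unfold Hc at hH
  split_ifs with h2
  · omega
  · omega

lemma BBz_high_ge {m r y z : ℕ} (hH : Hc m r z) : m ≤ BBz m r y z := by
  unfold BBz
  rw [if_pos hH]
  omega

lemma BBz_row_inj {m r y z z' : ℕ} (hm : 1 ≤ m) (hmr : m ≤ r) (hy : y < r)
    (hz : z < r) (hz' : z' < r) (h : BBz m r y z = BBz m r y z') : z = z' := by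
  by_cases h1 : Hc m r z <;> by_cases h2 : Hc m r z'
  · obtain ⟨hE1, hb1, hc1⟩ := bb_spec hm hmr hz h1
    obtain ⟨hE2, hb2, hc2⟩ := bb_spec hm hmr hz' h2
    unfold BBz at h
    rw [if_pos h1, if_pos h2] at h
    have h' : (y + m + z + bb r ((r-m)/2) z) % r = (y + m + z' + bb r ((r-m)/2) z') % r := by omega
    -- reduce to E z = E z'
    have m1 : (y + m) + ((z + bb r ((r-m)/2) z) % r) ≡ (y + m) + (z + bb r ((r-m)/2) z) [MOD r] :=
      Nat.ModEq.add_left _ (Nat.mod_modEq _ r)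
    have m2 : (y + m) + ((z' + bb r ((r-m)/2) z') % r) ≡ (y + m) + (z' + bb r ((r-m)/2) z') [MOD r] :=
      Nat.ModEq.add_left _ (Nat.mod_modEq _ r)
    have h'' : (y + m) + (z + bb r ((r-m)/2) z) ≡ (y + m) + (z' + bb r ((r-m)/2) z') [MOD r] := by
      have e1 : y + m + z + bb r ((r-m)/2) z = (y+m) + (z + bb r ((r-m)/2) z) := by omega
      have e2 : y + m + z' + bb r ((r-m)/2) z' = (y+m) + (z' + bb r ((r-m)/2) z') := by omega
      rw [e1, e2] at h'
      exact h'
    have hEeq : (z + bb r ((r-m)/2) z) % r = (z' + bb r ((r-m)/2) z') % r :=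
      cancel_modEq (by omega) (by omega) ((m1.trans h'').trans m2.symm)
    omega
  · exfalso
    have l1 := BBz_low_lt (y := y) hm hmr hz' h2
    have l2 := BBz_high_ge (y := y) h1
    omega
  · exfalso
    have l1 := BBz_low_lt (y := y) hm hmr hz h1
    have l2 := BBz_high_ge (y := y) h2
    omega
  · unfold BBz at h
    rw [if_neg h1, if_neg h2] at h
    unfold Hc at h1 h2
    split_ifs at h with e1 e2 <;> omega


lemma BBz_col_inj {m r y y' z z' : ℕ} (hm : 1 ≤ m) (hmr : m ≤ r)
    (hy : y < r) (hy' : y' < r) (hz : z < r) (hz' : z' < r)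
    (hrel : (z + y) % r = (z' + y') % r)
    (h : BBz m r y z = BBz m r y' z') : z = z' ∧ y = y' := by
  have recv : z = z' → y = y' := by
    intro e
    subst e
    have : y = y' := by
      have h1 : (z + y) ≡ (z + y') [MOD r] := hrel
      exact cancel_modEq hy hy' h1
    exact this
  by_cases h1 : Hc m r z <;> by_cases h2 : Hc m r z'
  · obtain ⟨hE1, hb1, hc1⟩ := bb_spec hm hmr hz h1
    obtain ⟨hE2, hb2, hc2⟩ := bb_spec hm hmr hz' h2
    unfold BBz at h
    rw [if_pos h1, if_pos h2] at h
    have h' : (y + m + z + bb r ((r-m)/2) z) % r = (y' + m + z' + bb r ((r-m)/2) z') % r := by omega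
    have M1 : (y + m + z + bb r ((r-m)/2) z) ≡ (y' + m + z' + bb r ((r-m)/2) z') [MOD r] := h'
    have M2 : (z' + y') ≡ (z + y) [MOD r] := hrel.symm
    have M3 := M1.add M2
    have e1 : y + m + z + bb r ((r-m)/2) z + (z' + y') = (y + y' + z + z' + m) + bb r ((r-m)/2) z := by omega
    have e2 : y' + m + z' + bb r ((r-m)/2) z' + (z + y) = (y + y' + z + z' + m) + bb r ((r-m)/2) z' := by omega
    rw [e1, e2] at M3
    have hbeq : bb r ((r-m)/2) z = bb r ((r-m)/2) z' :=
      cancel_modEq (by omega) (by omega) M3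
    have hzz : z = z' := by omega
    exact ⟨hzz, recv hzz⟩
  · exfalso
    have l1 := BBz_low_lt (y := y') hm hmr hz' h2
    have l2 := BBz_high_ge (y := y) h1
    omega
  · exfalso
    have l1 := BBz_low_lt (y := y) hm hmr hz h1
    have l2 := BBz_high_ge (y := y') h2
    omega
  · have hzz : z = z' := by
      unfold BBz at h
      rw [if_neg h1, if_neg h2] at h
      unfold Hc at h1 h2
      split_ifs at h with e1 e2 <;> omega
    exact ⟨hzz, recv hzz⟩


lemma left_ne_BBz {m r y z t : ℕ} (hm : 1 ≤ m) (hmr : m ≤ r)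
    (hy : y < r) (hz : z < r) (ht : t < m) :
    m + ((t + y) % r) ≠ BBz m r y z := by
  by_cases hH : Hc m r z
  · obtain ⟨hE, hb, _⟩ := bb_spec hm hmr hz hH
    intro h
    unfold BBz at h
    rw [if_pos hH] at h
    have h' : (t + y) % r = (y + m + z + bb r ((r-m)/2) z) % r := by omega
    have M1 : (y + m + z + bb r ((r-m)/2) z) ≡ (t + y) [MOD r] := h'.symm
    have A : (y + m) + ((z + bb r ((r-m)/2) z) % r) ≡ (y + m) + (z + bb r ((r-m)/2) z) [MOD r] :=
      Nat.ModEq.add_left _ (Nat.mod_modEq _ r)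
    have e1 : (y + m) + (z + bb r ((r-m)/2) z) = y + m + z + bb r ((r-m)/2) z := by omega
    rw [e1] at A
    have M2 := A.trans M1
    have e2 : (y + m) + ((z + bb r ((r-m)/2) z) % r) = y + (m + (z + bb r ((r-m)/2) z) % r) := by omega
    have e3 : t + y = y + t := by omega
    rw [e2, e3] at M2
    have := cancel_modEq (by omega) (by omega) M2
    omega
  · have l1 := BBz_low_lt (y := y) hm hmr hz hH
    omega

lemma top_ne_BB_col {m r y x α : ℕ} (hm : 1 ≤ m) (hmr : m ≤ r)
    (hy : y < r) (hx : x < r) (hα : α < m) :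
    m + ((x + α) % r) ≠ BB m r y x := by
  unfold BB
  set z := (x + r - y) % r with hzdef
  have hz : z < r := Nat.mod_lt _ (by omega)
  have hrel : (z + y) % r = x := zxy hx hy
  by_cases hH : Hc m r z
  · obtain ⟨hE, hb, _⟩ := bb_spec hm hmr hz hH
    intro h
    unfold BBz at h
    rw [if_pos hH] at h
    have h' : (x + α) % r = (y + m + z + bb r ((r-m)/2) z) % r := by omega
    have M1 : (x + α) ≡ (y + m + z + bb r ((r-m)/2) z) [MOD r] := h'
    have M2 : (z + y) ≡ x [MOD r] := by
      have : x % r = x := Nat.mod_eq_of_lt hx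
      unfold Nat.ModEq
      omega
    have M3 := M1.add M2
    have e1 : (x + α) + (z + y) = (x + y + z) + α := by omega
    have e2 : (y + m + z + bb r ((r-m)/2) z) + x = (x + y + z) + (m + bb r ((r-m)/2) z) := by omega
    rw [e1, e2] at M3
    have := cancel_modEq (by omega) (by omega) M3
    omega
  · have l1 := BBz_low_lt (y := y) hm hmr hz hH
    omega

lemma lam_lt {m r α t : ℕ} (hm : 1 ≤ m) (hmr : m ≤ r)
    (hα : α < m + r) (ht : t < m + r) : Lam m r α t < m + r := by
  have hr0 : 0 < r := by omega
  unfold Lam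
  split_ifs with h1 h2 h3
  · have := Nat.mod_lt (t + α) hm
    omega
  · have := Nat.mod_lt (t - m + α) hr0
    omega
  · have := Nat.mod_lt (t + (α - m)) hr0
    omega
  · exact BBz_lt hm (Nat.mod_lt _ hr0)

lemma lam_lt_m_iff {m r α t : ℕ} (hm : 1 ≤ m) (ht : t < m) (hα : α < m + r) :
    (Lam m r α t < m ↔ α < m) := by
  unfold Lam
  simp only [if_pos ht]
  split_ifs with h1
  · have := Nat.mod_lt (t + α) hm
    omega
  · omega

lemma lam_ge_m {m r α t : ℕ} (ht : m ≤ t) (hα : α < m) : m ≤ Lam m r α t := by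
  unfold Lam
  rw [if_pos hα, if_neg (by omega : ¬ t < m)]
  omega

lemma lam_row_inj {m r α t t' : ℕ} (hm : 1 ≤ m) (hmr : m ≤ r)
    (hα : α < m + r) (ht : t < m + r) (ht' : t' < m + r)
    (h : Lam m r α t = Lam m r α t') : t = t' := by
  have hr0 : 0 < r := by omega
  unfold Lam at h
  by_cases h1 : α < m
  · simp only [if_pos h1] at h
    by_cases h2 : t < m <;> by_cases h3 : t' < m
    · simp only [if_pos h2, if_pos h3] at h
      rw [Nat.add_comm t α, Nat.add_comm t' α] at h
      exact cancel_modEq h2 h3 h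
    · exfalso
      simp only [if_pos h2, if_neg h3] at h
      have := Nat.mod_lt (t + α) hm
      omega
    · exfalso
      simp only [if_neg h2, if_pos h3] at h
      have := Nat.mod_lt (t' + α) hm
      omega
    · simp only [if_neg h2, if_neg h3] at h
      have h' : (t - m + α) % r = (t' - m + α) % r := by omega
      rw [Nat.add_comm (t-m) α, Nat.add_comm (t'-m) α] at h'
      have := cancel_modEq (show t - m < r by omega) (show t' - m < r by omega) h'
      omega
  · simp only [if_neg h1] at h
    have hy : α - m < r := by omega
    by_cases h2 : t < m <;> by_cases h3 : t' < m
    · simp only [if_pos h2, if_pos h3] at h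
      have h' : (t + (α - m)) % r = (t' + (α - m)) % r := by omega
      rw [Nat.add_comm t (α-m), Nat.add_comm t' (α-m)] at h'
      have := cancel_modEq (show t < r by omega) (show t' < r by omega) h'
      omega
    · exfalso
      simp only [if_pos h2, if_neg h3] at h
      exact left_ne_BBz hm hmr hy (Nat.mod_lt _ hr0) h2 h
    · exfalso
      simp only [if_neg h2, if_pos h3] at h
      exact left_ne_BBz hm hmr hy (Nat.mod_lt _ hr0) h3 h.symm
    · simp only [if_neg h2, if_neg h3] at h
      unfold BB at h
      have hzz := BBz_row_inj hm hmr hy (Nat.mod_lt _ hr0) (Nat.mod_lt _ hr0) h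
      have e1 := zxy (show t - m < r by omega) hy
      have e2 := zxy (show t' - m < r by omega) hy
      rw [hzz] at e1
      omega

lemma lam_col_inj {m r α α' t : ℕ} (hm : 1 ≤ m) (hmr : m ≤ r)
    (ht : t < m + r) (hα : α < m + r) (hα' : α' < m + r)
    (h : Lam m r α t = Lam m r α' t) : α = α' := by
  have hr0 : 0 < r := by omega
  unfold Lam at h
  by_cases h2 : t < m
  · simp only [if_pos h2] at h
    by_cases ha : α < m <;> by_cases ha' : α' < m
    · simp only [if_pos ha, if_pos ha'] at h
      exact cancel_modEq ha ha' h
    · exfalso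
      simp only [if_pos ha, if_neg ha'] at h
      have := Nat.mod_lt (t + α) hm
      omega
    · exfalso
      simp only [if_neg ha, if_pos ha'] at h
      have := Nat.mod_lt (t + α') hm
      omega
    · simp only [if_neg ha, if_neg ha'] at h
      have h' : (t + (α - m)) % r = (t + (α' - m)) % r := by omega
      have := cancel_modEq (show α - m < r by omega) (show α' - m < r by omega) h'
      omega
  · simp only [if_neg h2] at h
    have hx : t - m < r := by omega
    by_cases ha : α < m <;> by_cases ha' : α' < m
    · simp only [if_pos ha, if_pos ha'] at h
      have h' : (t - m + α) % r = (t - m + α') % r := by omega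
      have := cancel_modEq (show α < r by omega) (show α' < r by omega) h'
      omega
    · exfalso
      simp only [if_pos ha, if_neg ha'] at h
      rw [Nat.add_comm (t-m) α] at h
      rw [Nat.add_comm α (t-m)] at h
      exact top_ne_BB_col hm hmr (show α' - m < r by omega) hx ha h
    · exfalso
      simp only [if_neg ha, if_pos ha'] at h
      rw [Nat.add_comm (t-m) α'] at h
      rw [Nat.add_comm α' (t-m)] at h
      exact top_ne_BB_col hm hmr (show α - m < r by omega) hx ha' h.symm
    · simp only [if_neg ha, if_neg ha'] at h
      unfold BB at h
      have hz : (t - m + r - (α - m)) % r < r := Nat.mod_lt _ hr0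
      have hz' : (t - m + r - (α' - m)) % r < r := Nat.mod_lt _ hr0
      have hrel : ((t - m + r - (α - m)) % r + (α - m)) % r
          = ((t - m + r - (α' - m)) % r + (α' - m)) % r := by
        rw [zxy hx (show α - m < r by omega), zxy hx (show α' - m < r by omega)]
      obtain ⟨hzz, hyy⟩ := BBz_col_inj hm hmr (show α - m < r by omega)
        (show α' - m < r by omega) hz hz' hrel h
      omega

end LRCubeAux

open LRCubeAux

/-- **Sufficiency.** For positive integers `m, n` with `n ≥ 2m`, every
layer-rainbow latin cube of order `m` can be extended to a layer-rainbow
latin cube of order `n`. -/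
theorem layerRainbow_extension_of_two_mul_le (m n : ℕ) (hm : 1 ≤ m) (hn : 2 * m ≤ n)
    (L : Fin m × Fin m × Fin m → Fin (m ^ 2)) (hL : IsLayerRainbowLatinCube L) :
    ∃ (h : m ≤ n) (L' : Fin n × Fin n × Fin n → Fin (n ^ 2))
      (φ : Fin (m ^ 2) → Fin (n ^ 2)),
        IsLayerRainbowLatinCube L' ∧ ExtendsVia h L L' φ := by
  obtain ⟨r, rfl⟩ : ∃ r, n = m + r := ⟨n - m, by omega⟩
  have hmr : m ≤ r := by omega
  have hmn : m ≤ m + r := by omega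
  have hr0 : 0 < r := by omega
  -- the permutation family
  have lamlt : ∀ α t : Fin (m + r), Lam m r α.val t.val < m + r :=
    fun α t => lam_lt hm hmr α.isLt t.isLt
  set F : Fin (m+r) → Fin (m+r) → Fin (m+r) :=
    fun i α => ⟨Lam m r α.val i.val, lamlt α i⟩ with hF
  have Finj : ∀ i, Function.Injective (F i) := by
    intro i a a' h
    exact Fin.ext (lam_col_inj hm hmr i.isLt a.isLt a'.isLt (congrArg Fin.val h))
  have Fsurj : ∀ i j, ∃ α, F i α = j := by
    intro i
    exact (Finite.injective_iff_surjective.mp (Finj i))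
  choose g hg using Fsurj
  have gval : ∀ i j, Lam m r (g i j).val i.val = j.val :=
    fun i j => congrArg Fin.val (hg i j)
  have ginj : ∀ i, Function.Injective (g i) := by
    intro i j j' e
    rw [← hg i j, ← hg i j', e]
  have glt : ∀ i j : Fin (m+r), i.val < m → ((g i j).val < m ↔ j.val < m) := by
    intro i j hi
    rw [← gval i j]
    exact (lam_lt_m_iff hm hi (g i j).isLt).symm
  have gge : ∀ i j : Fin (m+r), m ≤ i.val → (g i j).val < m → m ≤ j.val := by
    intro i j hi hg2
    rw [← gval i j]
    exact lam_ge_m hi hg2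
  -- symbol encoding
  have encb : ∀ a b : Fin (m+r), a.val * (m+r) + b.val < (m+r)^2 := by
    intro a b
    have h1 : a.val * (m+r) + b.val < (a.val + 1) * (m+r) := by
      rw [Nat.succ_mul]
      have := b.isLt
      omega
    have h2 : (a.val + 1) * (m+r) ≤ (m+r) * (m+r) :=
      Nat.mul_le_mul_right _ a.isLt
    calc a.val * (m+r) + b.val < (a.val + 1) * (m+r) := h1
      _ ≤ (m+r) * (m+r) := h2
      _ = (m+r)^2 := (sq (m+r)).symm
  set enc : Fin (m+r) → Fin (m+r) → Fin ((m+r)^2) :=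
    fun a b => ⟨a.val * (m+r) + b.val, encb a b⟩ with henc
  have encinj : ∀ a b a' b', enc a b = enc a' b' → a = a' ∧ b = b' := by
    intro a b a' b' h
    have hv : a.val * (m+r) + b.val = a'.val * (m+r) + b'.val := congrArg Fin.val h
    have hb : b.val = b'.val := by
      have e1 : (a.val * (m+r) + b.val) % (m+r) = b.val := by
        rw [Nat.add_comm, Nat.add_mul_mod_self_right, Nat.mod_eq_of_lt b.isLt]
      have e2 : (a'.val * (m+r) + b'.val) % (m+r) = b'.val := by
        rw [Nat.add_comm, Nat.add_mul_mod_self_right, Nat.mod_eq_of_lt b'.isLt]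
      rw [← e1, ← e2, hv]
    have ha : a.val = a'.val := by
      have hmul : a.val * (m+r) = a'.val * (m+r) := by omega
      exact Nat.eq_of_mul_eq_mul_right (by omega) hmul
    exact ⟨Fin.ext ha, Fin.ext hb⟩
  -- the embedding of symbols
  have hdiv : ∀ s : Fin (m^2), s.val / m < m + r := by
    intro s
    have hs := s.isLt
    have e : m^2 = m*m := sq m
    have : s.val / m < m := Nat.div_lt_of_lt_mul (by omega)
    omega
  have hmod : ∀ s : Fin (m^2), s.val % m < m + r := by
    intro s
    have := Nat.mod_lt s.val hm
    omega
  set φ : Fin (m^2) → Fin ((m+r)^2) :=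
    fun s => enc ⟨s.val / m, hdiv s⟩ ⟨s.val % m, hmod s⟩ with hφ
  have φinj : Function.Injective φ := by
    intro s s' h
    obtain ⟨h1, h2⟩ := encinj _ _ _ _ h
    have e1 : s.val / m = s'.val / m := congrArg Fin.val h1
    have e2 : s.val % m = s'.val % m := congrArg Fin.val h2
    have d1 := Nat.div_add_mod s.val m
    have d2 := Nat.div_add_mod s'.val m
    refine Fin.ext ?_
    rw [← d1, ← d2, e1, e2]
  have φenc : ∀ (s : Fin (m^2)) (a b : Fin (m+r)), φ s = enc a b → a.val < m ∧ b.val < m := by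
    intro s a b h
    obtain ⟨h1, h2⟩ := encinj _ _ _ _ h
    have e1 : s.val / m = a.val := congrArg Fin.val h1
    have e2 : s.val % m = b.val := congrArg Fin.val h2
    have hs := s.isLt
    have e : m^2 = m*m := sq m
    have d1 : s.val / m < m := Nat.div_lt_of_lt_mul (by omega)
    have d2 := Nat.mod_lt s.val hm
    omega
  -- the extended cube
  set L' : Fin (m+r) × Fin (m+r) × Fin (m+r) → Fin ((m+r)^2) := fun p =>
    if h : p.1.val < m ∧ p.2.1.val < m ∧ p.2.2.val < m then
      φ (L (⟨p.1.val, h.1⟩, ⟨p.2.1.val, h.2.1⟩, ⟨p.2.2.val, h.2.2⟩))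
    else enc (g p.1 p.2.1) (g p.1 p.2.2) with hL'
  refine ⟨hmn, L', φ, ⟨?_, ?_, ?_⟩, φinj, ?_⟩
  · -- layers with fixed first coordinate
    intro i p p' h
    simp only [hL'] at h
    by_cases c1 : i.val < m ∧ p.1.val < m ∧ p.2.val < m <;>
      by_cases c2 : i.val < m ∧ p'.1.val < m ∧ p'.2.val < m
    · rw [dif_pos c1, dif_pos c2] at h
      have hLL := φinj h
      have h2 := hL.1 ⟨i.val, c1.1⟩
        (a₁ := (⟨p.1.val, c1.2.1⟩, ⟨p.2.val, c1.2.2⟩))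
        (a₂ := (⟨p'.1.val, c2.2.1⟩, ⟨p'.2.val, c2.2.2⟩)) hLL
      have e1 : p.1.val = p'.1.val := congrArg (fun q : Fin m × Fin m => q.1.val) h2
      have e2 : p.2.val = p'.2.val := congrArg (fun q : Fin m × Fin m => q.2.val) h2
      exact Prod.ext (Fin.ext e1) (Fin.ext e2)
    · exfalso
      rw [dif_pos c1, dif_neg c2] at h
      obtain ⟨ha, hb⟩ := φenc _ _ _ h
      exact c2 ⟨c1.1, (glt i p'.1 c1.1).mp ha, (glt i p'.2 c1.1).mp hb⟩
    · exfalso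
      rw [dif_neg c1, dif_pos c2] at h
      obtain ⟨ha, hb⟩ := φenc _ _ _ h.symm
      exact c1 ⟨c2.1, (glt i p.1 c2.1).mp ha, (glt i p.2 c2.1).mp hb⟩
    · rw [dif_neg c1, dif_neg c2] at h
      obtain ⟨h1, h2⟩ := encinj _ _ _ _ h
      exact Prod.ext (ginj i h1) (ginj i h2)
  · -- layers with fixed second coordinate
    intro j p p' h
    simp only [hL'] at h
    by_cases c1 : p.1.val < m ∧ j.val < m ∧ p.2.val < m <;>
      by_cases c2 : p'.1.val < m ∧ j.val < m ∧ p'.2.val < m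
    · rw [dif_pos c1, dif_pos c2] at h
      have hLL := φinj h
      have hLL' : (fun q : Fin m × Fin m => L (q.1, (⟨j.val, c1.2.1⟩ : Fin m), q.2))
            (⟨p.1.val, c1.1⟩, ⟨p.2.val, c1.2.2⟩)
          = (fun q : Fin m × Fin m => L (q.1, (⟨j.val, c1.2.1⟩ : Fin m), q.2))
            (⟨p'.1.val, c2.1⟩, ⟨p'.2.val, c2.2.2⟩) := hLL
      have h2 := hL.2.1 ⟨j.val, c1.2.1⟩ hLL'
      have e1 : p.1.val = p'.1.val := congrArg (fun q : Fin m × Fin m => q.1.val) h2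
      have e2 : p.2.val = p'.2.val := congrArg (fun q : Fin m × Fin m => q.2.val) h2
      exact Prod.ext (Fin.ext e1) (Fin.ext e2)
    · exfalso
      rw [dif_pos c1, dif_neg c2] at h
      obtain ⟨ha, hb⟩ := φenc _ _ _ h
      by_cases hi' : p'.1.val < m
      · exact c2 ⟨hi', c1.2.1, (glt p'.1 p'.2 hi').mp hb⟩
      · have := gge p'.1 j (by omega) ha
        omega
    · exfalso
      rw [dif_neg c1, dif_pos c2] at h
      obtain ⟨ha, hb⟩ := φenc _ _ _ h.symm
      by_cases hi : p.1.val < m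
      · exact c1 ⟨hi, c2.2.1, (glt p.1 p.2 hi).mp hb⟩
      · have := gge p.1 j (by omega) ha
        omega
    · rw [dif_neg c1, dif_neg c2] at h
      obtain ⟨h1, h2⟩ := encinj _ _ _ _ h
      have v1 := gval p.1 j
      have v2 := gval p'.1 j
      rw [h1] at v1
      have hii : p.1.val = p'.1.val :=
        lam_row_inj hm hmr (g p'.1 j).isLt p.1.isLt p'.1.isLt (by rw [v1, v2])
      have hpp : p.1 = p'.1 := Fin.ext hii
      rw [hpp] at h2
      exact Prod.ext hpp (ginj p'.1 h2)
  · -- layers with fixed third coordinate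
    intro k p p' h
    simp only [hL'] at h
    by_cases c1 : p.1.val < m ∧ p.2.val < m ∧ k.val < m <;>
      by_cases c2 : p'.1.val < m ∧ p'.2.val < m ∧ k.val < m
    · rw [dif_pos c1, dif_pos c2] at h
      have hLL := φinj h
      have hLL' : (fun q : Fin m × Fin m => L (q.1, q.2, (⟨k.val, c1.2.2⟩ : Fin m)))
            (⟨p.1.val, c1.1⟩, ⟨p.2.val, c1.2.1⟩)
          = (fun q : Fin m × Fin m => L (q.1, q.2, (⟨k.val, c1.2.2⟩ : Fin m)))
            (⟨p'.1.val, c2.1⟩, ⟨p'.2.val, c2.2.1⟩) := hLL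
      have h2 := hL.2.2 ⟨k.val, c1.2.2⟩ hLL'
      have e1 : p.1.val = p'.1.val := congrArg (fun q : Fin m × Fin m => q.1.val) h2
      have e2 : p.2.val = p'.2.val := congrArg (fun q : Fin m × Fin m => q.2.val) h2
      exact Prod.ext (Fin.ext e1) (Fin.ext e2)
    · exfalso
      rw [dif_pos c1, dif_neg c2] at h
      obtain ⟨ha, hb⟩ := φenc _ _ _ h
      by_cases hi' : p'.1.val < m
      · exact c2 ⟨hi', (glt p'.1 p'.2 hi').mp ha, c1.2.2⟩
      · have := gge p'.1 k (by omega) hb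
        omega
    · exfalso
      rw [dif_neg c1, dif_pos c2] at h
      obtain ⟨ha, hb⟩ := φenc _ _ _ h.symm
      by_cases hi : p.1.val < m
      · exact c1 ⟨hi, (glt p.1 p.2 hi).mp ha, c2.2.2⟩
      · have := gge p.1 k (by omega) hb
        omega
    · rw [dif_neg c1, dif_neg c2] at h
      obtain ⟨h1, h2⟩ := encinj _ _ _ _ h
      have v1 := gval p.1 k
      have v2 := gval p'.1 k
      rw [h2] at v1
      have hii : p.1.val = p'.1.val :=
        lam_row_inj hm hmr (g p'.1 k).isLt p.1.isLt p'.1.isLt (by rw [v1, v2])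
      have hpp : p.1 = p'.1 := Fin.ext hii
      rw [hpp] at h1
      exact Prod.ext hpp (ginj p'.1 h1)
  · -- extension property
    intro i j k
    simp only [hL']
    have hc : (Fin.castLE hmn i).val < m ∧ (Fin.castLE hmn j).val < m ∧
        (Fin.castLE hmn k).val < m := ⟨i.isLt, j.isLt, k.isLt⟩
    rw [dif_pos hc]
    exact congrArg φ (congrArg L (Prod.ext (Fin.ext rfl)
      (Prod.ext (Fin.ext rfl) (Fin.ext rfl))))
end

section
/- For every positive integer n there exists a layer-rainbow latin cube of order n. -/
/-- For every positive integer `n` there exists a layer-rainbow latin cube of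
order `n`. -/
theorem exists_layerRainbowLatinCube (n : ℕ) (hn : 1 ≤ n) :
    ∃ L : Fin n × Fin n × Fin n → Fin (n ^ 2), IsLayerRainbowLatinCube L := by
  have : NeZero n := ⟨by omega⟩
  let e : Fin n × Fin n ≃ Fin (n ^ 2) := finProdFinEquiv.trans (finCongr (sq n).symm)
  refine ⟨fun p => e (p.1 + p.2.1, p.2.1 + p.2.2), ?_, ?_, ?_⟩
  · intro i p q h
    simp only [e.apply_eq_iff_eq, Prod.mk.injEq] at h
    obtain ⟨h1, h2⟩ := h
    have hj : p.1 = q.1 := by exact add_left_cancel h1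
    have hk : p.2 = q.2 := by rw [hj] at h2; exact add_left_cancel h2
    exact Prod.ext hj hk
  · intro j p q h
    simp only [e.apply_eq_iff_eq, Prod.mk.injEq] at h
    exact Prod.ext (add_right_cancel h.1) (add_left_cancel h.2)
  · intro k p q h
    simp only [e.apply_eq_iff_eq, Prod.mk.injEq] at h
    obtain ⟨h1, h2⟩ := h
    have hj : p.2 = q.2 := add_right_cancel h2
    have hi : p.1 = q.1 := by rw [hj] at h1; exact add_right_cancel h1
    exact Prod.ext hi hj
end

section
/- Let m ≥ 1 and n be positive integers, let L be a layer-rainbow latin cube of order m, and let L' be a layer-rainbow latin cube of order n extending L via the injection φ : Fin (m^2) → Fin (n^2). Then for every symbol s ∈ Fin (m^2) and every cell (x, y, z) ∈ (Fin n)^3 with L'(x, y, z) = φ(s), either all three of x, y, z are less than m, or all three of x, y, z are at least m. -/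
/-- If `L'` of order `n` extends `L` of order `m` via `φ`, then every cell of
`L'` carrying a symbol `φ s` from the image of `φ` has either all three
coordinates less than `m` or all three coordinates at least `m`. -/
theorem layerRainbow_extension_symbol_cells (m n : ℕ) (hm : 1 ≤ m) (hn : 1 ≤ n)
    (h : m ≤ n) (L : Fin m × Fin m × Fin m → Fin (m ^ 2))
    (hL : IsLayerRainbowLatinCube L)
    (L' : Fin n × Fin n × Fin n → Fin (n ^ 2)) (hL' : IsLayerRainbowLatinCube L')
    (φ : Fin (m ^ 2) → Fin (n ^ 2)) (hext : ExtendsVia h L L' φ) :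
    ∀ (s : Fin (m ^ 2)) (x y z : Fin n), L' (x, y, z) = φ s →
      ((x : ℕ) < m ∧ (y : ℕ) < m ∧ (z : ℕ) < m) ∨
      (m ≤ (x : ℕ) ∧ m ≤ (y : ℕ) ∧ m ≤ (z : ℕ)) := by
  obtain ⟨hφ, hcomm⟩ := hext
  have hcard : Fintype.card (Fin m × Fin m) = Fintype.card (Fin (m ^ 2)) := by
    simp [pow_two]
  -- key1 : first coordinate small forces the other two small
  have key1 : ∀ (s : Fin (m ^ 2)) (x y z : Fin n), L' (x, y, z) = φ s → (x : ℕ) < m →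
      (y : ℕ) < m ∧ (z : ℕ) < m := by
    intro s x y z hxyz hx
    set x' : Fin m := ⟨x, hx⟩ with hx'
    have hsurj : Function.Surjective fun p : Fin m × Fin m => L (x', p.1, p.2) :=
      ((Fintype.bijective_iff_injective_and_card _).2 ⟨hL.1 x', hcard⟩).2
    obtain ⟨⟨j, k⟩, hjk⟩ := hsurj s
    have hxx : Fin.castLE h x' = x := by ext; simp [hx']
    have h2 : L' (x, Fin.castLE h j, Fin.castLE h k) = φ s := by
      rw [← hxx, hcomm]; exact congrArg φ hjk
    have h3 := hL'.1 x (a₁ := (y, z)) (a₂ := (Fin.castLE h j, Fin.castLE h k))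
      (by simpa using hxyz.trans h2.symm)
    have hy : y = Fin.castLE h j := congrArg Prod.fst h3
    have hz : z = Fin.castLE h k := congrArg Prod.snd h3
    exact ⟨hy ▸ j.isLt, hz ▸ k.isLt⟩
  -- key2 : second coordinate small forces the first small
  have key2 : ∀ (s : Fin (m ^ 2)) (x y z : Fin n), L' (x, y, z) = φ s → (y : ℕ) < m →
      (x : ℕ) < m := by
    intro s x y z hxyz hy
    set y' : Fin m := ⟨y, hy⟩ with hy'
    have hsurj : Function.Surjective fun p : Fin m × Fin m => L (p.1, y', p.2) :=
      ((Fintype.bijective_iff_injective_and_card _).2 ⟨hL.2.1 y', hcard⟩).2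
    obtain ⟨⟨j, k⟩, hjk⟩ := hsurj s
    have hyy : Fin.castLE h y' = y := by ext; simp [hy']
    have h2 : L' (Fin.castLE h j, y, Fin.castLE h k) = φ s := by
      rw [← hyy, hcomm]; exact congrArg φ hjk
    have h3 := hL'.2.1 y (a₁ := (x, z)) (a₂ := (Fin.castLE h j, Fin.castLE h k))
      (by simpa using hxyz.trans h2.symm)
    have hx : x = Fin.castLE h j := congrArg Prod.fst h3
    exact hx ▸ j.isLt
  -- key3 : third coordinate small forces the first small
  have key3 : ∀ (s : Fin (m ^ 2)) (x y z : Fin n), L' (x, y, z) = φ s → (z : ℕ) < m →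
      (x : ℕ) < m := by
    intro s x y z hxyz hz
    set z' : Fin m := ⟨z, hz⟩ with hz'
    have hsurj : Function.Surjective fun p : Fin m × Fin m => L (p.1, p.2, z') :=
      ((Fintype.bijective_iff_injective_and_card _).2 ⟨hL.2.2 z', hcard⟩).2
    obtain ⟨⟨j, k⟩, hjk⟩ := hsurj s
    have hzz : Fin.castLE h z' = z := by ext; simp [hz']
    have h2 : L' (Fin.castLE h j, Fin.castLE h k, z) = φ s := by
      rw [← hzz, hcomm]; exact congrArg φ hjk
    have h3 := hL'.2.2 z (a₁ := (x, y)) (a₂ := (Fin.castLE h j, Fin.castLE h k))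
      (by simpa using hxyz.trans h2.symm)
    have hx : x = Fin.castLE h j := congrArg Prod.fst h3
    exact hx ▸ j.isLt
  intro s x y z hxyz
  by_cases hx : (x : ℕ) < m
  · exact Or.inl ⟨hx, key1 s x y z hxyz hx⟩
  · refine Or.inr ⟨le_of_not_gt hx, ?_, ?_⟩
    · by_contra hy
      exact hx (key2 s x y z hxyz (lt_of_not_ge hy))
    · by_contra hz
      exact hx (key3 s x y z hxyz (lt_of_not_ge hz))
end

section
/- Let m ≥ 1 and n be positive integers, let L be a layer-rainbow latin cube of order m, and let L' be a layer-rainbow latin cube of order n extending L via the injection φ : Fin (m^2) → Fin (n^2). Then for every symbol s ∈ Fin (m^2), the number of cells (x, y, z) ∈ (Fin n)^3 with all three coordinates at least m and L'(x, y, z) = φ(s) is exactly n − m. Consequently, counting over all m^2 symbols in the image of φ, one obtains m^2 · (n − m) ≤ (n − m)^3. -/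
/-!
A layer of `L'` through an old index `y < m` contains the corresponding layer of `L`, which already
uses every old symbol; so in that layer an old symbol `φ s` occurs only inside the old square.
Hence a cell `(x, y, z)` carrying `φ s` with `x ≥ m` has `y, z ≥ m` as well. Since the layer `x`
of `L'` contains `φ s` exactly once, `φ s` occurs exactly once in each of the `n - m` layers
`x ≥ m`, always in the corner `[m, n)³`. The `m²` old symbols thus fill `m² (n - m)` distinct
cells of that corner of size `(n - m)³`.
-/

open Finset Function

theorem surjective_of_injective_fin_sq {n : ℕ} {f : Fin n × Fin n → Fin (n ^ 2)}
    (hf : Injective f) : Surjective f :=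
  ((Fintype.bijective_iff_injective_and_card f).mpr ⟨hf, by simp [sq]⟩).surjective

theorem fst_lt_of_extends_eq {m n : ℕ} (h : m ≤ n) {β : Type*} {f : Fin m × Fin m → Fin (m ^ 2)}
    (hf : Injective f) {g : Fin n × Fin n → β} (hg : Injective g) {φ : Fin (m ^ 2) → β}
    (hfg : ∀ a c, g (Fin.castLE h a, Fin.castLE h c) = φ (f (a, c)))
    {s : Fin (m ^ 2)} {x z : Fin n} (hs : g (x, z) = φ s) : (x : ℕ) < m := by
  obtain ⟨⟨a, c⟩, rfl⟩ := surjective_of_injective_fin_sq hf s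
  obtain ⟨rfl, -⟩ := Prod.mk.inj (hg (hs.trans (hfg a c).symm))
  exact a.isLt

def newIndices (m n : ℕ) : Finset (Fin n) := {i | m ≤ (i : ℕ)}

theorem card_newIndices (m n : ℕ) : #(newIndices m n) = n - m := by
  simp_rw [newIndices, ← not_lt, filter_not, card_sdiff_of_subset (filter_subset _ _),
    Fin.card_filter_val_lt]
  simp
  omega

section Extension

variable {m n : ℕ} {h : m ≤ n} {L : Fin m × Fin m × Fin m → Fin (m ^ 2)}
  {L' : Fin n × Fin n × Fin n → Fin (n ^ 2)} {φ : Fin (m ^ 2) → Fin (n ^ 2)}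

theorem ExtendsVia.le_of_le_fst (hL : IsLayerRainbowLatinCube L)
    (hL' : IsLayerRainbowLatinCube L') (hext : ExtendsVia h L L' φ) {s : Fin (m ^ 2)}
    {x y z : Fin n} (hs : L' (x, y, z) = φ s) (hx : m ≤ (x : ℕ)) :
    m ≤ (y : ℕ) ∧ m ≤ (z : ℕ) := by
  constructor
  · by_contra! hy
    have := fst_lt_of_extends_eq h (hL.2.1 ⟨y, hy⟩) (hL'.2.1 y) (fun a c => hext.2 a ⟨y, hy⟩ c) hs
    omega
  · by_contra! hz
    have := fst_lt_of_extends_eq h (hL.2.2 ⟨z, hz⟩) (hL'.2.2 z) (fun a c => hext.2 a c ⟨z, hz⟩) hs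
    omega

theorem ExtendsVia.card_corner_filter_eq (hL : IsLayerRainbowLatinCube L)
    (hL' : IsLayerRainbowLatinCube L') (hext : ExtendsVia h L L' φ) (s : Fin (m ^ 2)) :
    #{p ∈ newIndices m n ×ˢ newIndices m n ×ˢ newIndices m n | L' p = φ s} = n - m := by
  rw [← card_newIndices m n]
  refine card_nbij Prod.fst (fun p hp => (mem_product.1 (mem_filter.1 hp).1).1) ?_ ?_
  · rintro ⟨x, y, z⟩ hp ⟨x', y', z'⟩ hq (rfl : x = x')
    have hyz : (y, z) = (y', z') := hL'.1 x ((mem_filter.1 hp).2.trans (mem_filter.1 hq).2.symm)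
    obtain ⟨rfl, rfl⟩ := Prod.mk.inj hyz
    rfl
  · intro x hx
    have hx : m ≤ (x : ℕ) := (mem_filter.1 hx).2
    obtain ⟨⟨y, z⟩, hs⟩ := surjective_of_injective_fin_sq (hL'.1 x) (φ s)
    obtain ⟨hy, hz⟩ := hext.le_of_le_fst hL hL' hs hx
    exact ⟨(x, y, z), by simp [newIndices, hx, hy, hz, hs], rfl⟩

end Extension

theorem card_mul_le_of_card_fiber_eq {α β γ : Type*} [Fintype α] [DecidableEq β]
    (C : Finset γ) (f : γ → β) {φ : α → β} (hφ : Injective φ) {k : ℕ}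
    (hk : ∀ a, #{c ∈ C | f c = φ a} = k) : Fintype.card α * k ≤ #C := by
  calc Fintype.card α * k = ∑ a, #{c ∈ C | f c = φ a} := by simp [hk]
    _ = ∑ b ∈ univ.image φ, #{c ∈ C | f c = b} := by rw [sum_image fun a _ b _ h => hφ h]
    _ = #{c ∈ C | f c ∈ univ.image φ} := sum_card_fiberwise_eq_card_filter C _ f
    _ ≤ #C := card_filter_le C _

theorem layerRainbow_extension_count_general (m n : ℕ)
    (h : m ≤ n) (L : Fin m × Fin m × Fin m → Fin (m ^ 2))
    (hL : IsLayerRainbowLatinCube L)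
    (L' : Fin n × Fin n × Fin n → Fin (n ^ 2)) (hL' : IsLayerRainbowLatinCube L')
    (φ : Fin (m ^ 2) → Fin (n ^ 2)) (hext : ExtendsVia h L L' φ) :
    (∀ s : Fin (m ^ 2),
      (Finset.univ.filter fun p : Fin n × Fin n × Fin n =>
        m ≤ (p.1 : ℕ) ∧ m ≤ (p.2.1 : ℕ) ∧ m ≤ (p.2.2 : ℕ) ∧ L' p = φ s).card
        = n - m) ∧
    m ^ 2 * (n - m) ≤ (n - m) ^ 3 := by
  have hcorner : ∀ s : Fin (m ^ 2),
      (univ.filter fun p : Fin n × Fin n × Fin n =>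
        m ≤ (p.1 : ℕ) ∧ m ≤ (p.2.1 : ℕ) ∧ m ≤ (p.2.2 : ℕ) ∧ L' p = φ s) =
      {p ∈ newIndices m n ×ˢ newIndices m n ×ˢ newIndices m n | L' p = φ s} := by
    intro s
    ext p
    simp [newIndices, and_assoc]
  have hcount := hext.card_corner_filter_eq hL hL'
  refine ⟨fun s => hcorner s ▸ hcount s, ?_⟩
  have hle := card_mul_le_of_card_fiber_eq _ L' hext.1 hcount
  rw [card_product, card_product, card_newIndices, Fintype.card_fin] at hle
  convert hle using 1
  ring

/-- If `L'` of order `n` extends `L` of order `m` via `φ`, then each symbol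
`φ s` occupies exactly `n - m` cells all of whose coordinates are at least
`m`; consequently `m^2 * (n - m) ≤ (n - m)^3`. -/
theorem layerRainbow_extension_count (m n : ℕ) (hm : 1 ≤ m) (hn : 1 ≤ n)
    (h : m ≤ n) (L : Fin m × Fin m × Fin m → Fin (m ^ 2))
    (hL : IsLayerRainbowLatinCube L)
    (L' : Fin n × Fin n × Fin n → Fin (n ^ 2)) (hL' : IsLayerRainbowLatinCube L')
    (φ : Fin (m ^ 2) → Fin (n ^ 2)) (hext : ExtendsVia h L L' φ) :
    (∀ s : Fin (m ^ 2),
      (Finset.univ.filter fun p : Fin n × Fin n × Fin n =>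
        m ≤ (p.1 : ℕ) ∧ m ≤ (p.2.1 : ℕ) ∧ m ≤ (p.2.2 : ℕ) ∧ L' p = φ s).card
        = n - m) ∧
    m ^ 2 * (n - m) ≤ (n - m) ^ 3 :=
  layerRainbow_extension_count_general m n h L hL L' hL' φ hext
end

section
/- Let m ≥ 2 and n be integers with n ≥ 2m, and set N = n^2 − m^2. Then there exist sequences of nonnegative integers (a_i), (b_i), (c_i) for i = 1, …, N such that: (1) Σ_i a_i = Σ_i b_i = Σ_i c_i = m^2·(n − m); (2) a_i + b_i + c_i ≥ 3m − n for every i; and (3) a_i + b_i ≤ m, a_i + c_i ≤ m, and b_i + c_i ≤ m for every i. -/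
private lemma sum_Ico_const' {f : ℕ → ℕ} {lo hi c : ℕ}
    (h : ∀ v, lo ≤ v → v < hi → f v = c) :
    ∑ v ∈ Finset.Ico lo hi, f v = (hi - lo) * c := by
  rw [Finset.sum_congr rfl fun v hv => h v (Finset.mem_Ico.mp hv).1 (Finset.mem_Ico.mp hv).2,
    Finset.sum_const, Nat.card_Ico, smul_eq_mul]

/-- For integers `m ≥ 2`, `n ≥ 2m`, and `N = n² - m²`, there are sequences of
nonnegative integers `(aᵢ), (bᵢ), (cᵢ)`, `i = 1, …, N`, with
`Σ aᵢ = Σ bᵢ = Σ cᵢ = m²(n - m)`, with `aᵢ + bᵢ + cᵢ ≥ 3m - n` for every `i`,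
and with `aᵢ + bᵢ ≤ m`, `aᵢ + cᵢ ≤ m`, `bᵢ + cᵢ ≤ m` for every `i`. -/
theorem exists_coloring_multiplicities (m n : ℕ) (hm : 2 ≤ m) (hn : 2 * m ≤ n) :
    ∃ a b c : Fin (n ^ 2 - m ^ 2) → ℕ,
      (∑ i, a i = m ^ 2 * (n - m) ∧ ∑ i, b i = m ^ 2 * (n - m) ∧
        ∑ i, c i = m ^ 2 * (n - m)) ∧
      (∀ i, 3 * (m : ℤ) - (n : ℤ) ≤ (a i : ℤ) + (b i : ℤ) + (c i : ℤ)) ∧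
      (∀ i, a i + b i ≤ m ∧ a i + c i ≤ m ∧ b i + c i ≤ m) := by
  obtain ⟨d, rfl⟩ : ∃ d, n = m + d := ⟨n - m, by omega⟩
  have hmd : m ≤ d := by omega
  have hsq : (m + d) ^ 2 = m ^ 2 + (2 * (m * d) + d * d) := by ring
  have hNK : (m + d) ^ 2 - m ^ 2 = 2 * (m * d) + d * d := by omega
  set A := m * d with hA
  set K := d * d with hK
  set T := m * m * d with hT
  have hK0 : 0 < K := by
    rw [hK]; exact Nat.mul_pos (by omega) (by omega)
  set q := T / K with hq
  set r := T % K with hr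
  have hdm : T = K * q + r := (Nat.div_add_mod T K).symm
  have hrK : r < K := Nat.mod_lt _ hK0
  have hTKm : T ≤ K * m := by
    calc T = m * d * m := by rw [hT]; ring
      _ ≤ d * d * m := Nat.mul_le_mul_right _ (Nat.mul_le_mul_right _ hmd)
      _ = K * m := by rw [hK]
  have hqm : q ≤ m := by
    have h1 := Nat.div_le_div_right (c := K) hTKm
    rwa [Nat.mul_div_cancel_left _ hK0] at h1
  have hq1m : q + 1 ≤ m ∨ r = 0 := by
    rcases lt_or_eq_of_le hqm with h | h
    · left; omega
    · right
      have h2 : T = K * m + r := by rw [← h]; exact hdm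
      omega
  have hqt : (3 * m - (m + d)) * K ≤ T := by
    rcases le_or_gt (2 * m) d with h | h
    · have h0 : 3 * m - (m + d) = 0 := by omega
      rw [h0]; simp
    · have he : 3 * m - (m + d) = 2 * m - d := by omega
      have hdl : d ≤ 2 * m := by omega
      have h2 : (2 * m - d) * d ≤ m * m := by
        zify [hdl]
        nlinarith [sq_nonneg ((m : ℤ) - d)]
      calc (3 * m - (m + d)) * K = ((2 * m - d) * d) * d := by rw [he, hK]; ring
        _ ≤ (m * m) * d := Nat.mul_le_mul_right _ h2
        _ = T := by rw [hT]
  have hq_ge : 3 * m - (m + d) ≤ q := by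
    rw [hq]
    exact (Nat.le_div_iff_mul_le hK0).mpr hqt
  have hsplit : ∀ f : ℕ → ℕ, ∑ i : Fin ((m + d) ^ 2 - m ^ 2), f i =
      ∑ v ∈ Finset.Ico 0 A, f v + (∑ v ∈ Finset.Ico A (2 * A), f v +
        (∑ v ∈ Finset.Ico (2 * A) (2 * A + r), f v +
          ∑ v ∈ Finset.Ico (2 * A + r) (2 * A + K), f v)) := by
    intro f
    rw [Fin.sum_univ_eq_sum_range, hNK, Finset.range_eq_Ico,
      ← Finset.sum_Ico_consecutive f (show 0 ≤ A by omega) (show A ≤ 2 * A + K by omega),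
      ← Finset.sum_Ico_consecutive f (show A ≤ 2 * A by omega)
        (show 2 * A ≤ 2 * A + K by omega),
      ← Finset.sum_Ico_consecutive f (show 2 * A ≤ 2 * A + r by omega)
        (show 2 * A + r ≤ 2 * A + K by omega)]
  have hTeq : m ^ 2 * (m + d - m) = T := by
    have h1 : m + d - m = d := by omega
    rw [h1, hT]; ring
  refine ⟨fun i => if (i : ℕ) < A then m else 0,
    fun i => if (i : ℕ) < A then 0 else if (i : ℕ) < 2 * A then m else 0,
    fun i => if (i : ℕ) < 2 * A then 0 else if (i : ℕ) < 2 * A + r then q + 1 else q,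
    ⟨?_, ?_, ?_⟩, ?_, ?_⟩
  · refine (hsplit (fun v => if v < A then m else 0)).trans ?_
    rw [sum_Ico_const' (c := m) (fun v h1 h2 => if_pos h2),
      sum_Ico_const' (c := 0) (fun v h1 h2 => if_neg (by omega)),
      sum_Ico_const' (c := 0) (fun v h1 h2 => if_neg (by omega)),
      sum_Ico_const' (c := 0) (fun v h1 h2 => if_neg (by omega)), hTeq]
    simp only [Nat.sub_zero, mul_zero, zero_mul, add_zero, zero_add]
    rw [hA, hT]; ring
  · refine (hsplit (fun v => if v < A then 0 else if v < 2 * A then m else 0)).trans ?_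
    rw [sum_Ico_const' (c := 0) (fun v h1 h2 => if_pos h2),
      sum_Ico_const' (c := m) (fun v h1 h2 => by
        rw [if_neg (by omega), if_pos h2]),
      sum_Ico_const' (c := 0) (fun v h1 h2 => by
        rw [if_neg (by omega), if_neg (by omega)]),
      sum_Ico_const' (c := 0) (fun v h1 h2 => by
        rw [if_neg (by omega), if_neg (by omega)]), hTeq]
    simp only [Nat.sub_zero, mul_zero, zero_mul, add_zero, zero_add]
    have h3 : 2 * A - A = A := by omega
    rw [h3, hA, hT]; ring
  · refine (hsplit (fun v => if v < 2 * A then 0 else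
      if v < 2 * A + r then q + 1 else q)).trans ?_
    rw [sum_Ico_const' (c := 0) (fun v h1 h2 => if_pos (by omega)),
      sum_Ico_const' (c := 0) (fun v h1 h2 => if_pos h2),
      sum_Ico_const' (c := q + 1) (fun v h1 h2 => by
        rw [if_neg (by omega), if_pos h2]),
      sum_Ico_const' (c := q) (fun v h1 h2 => by
        rw [if_neg (by omega), if_neg (by omega)]), hTeq]
    simp only [Nat.sub_zero, mul_zero, zero_mul, add_zero, zero_add]
    obtain ⟨s, hs⟩ : ∃ s, K = r + s := ⟨K - r, by omega⟩
    have h1 : 2 * A + r - 2 * A = r := by omega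
    have h2 : 2 * A + K - (2 * A + r) = s := by omega
    rw [h1, h2, hdm, hs]; ring
  · intro i
    dsimp only
    split_ifs <;> push_cast <;> omega
  · intro i
    rcases hq1m with h | h <;>
      refine ⟨?_, ?_, ?_⟩ <;> dsimp only <;> split_ifs <;> omega
end

section
/- Let m ≥ 2 and n be integers with n ≥ 2m. Then there exist functions a, b, c, d, e, f, g : Fin (n^2) → ℕ such that: (1) for every i < m^2, a_i = b_i = c_i = d_i = e_i = f_i = 0 and g_i = n − m; (2) for every i ≥ m^2, f_i + b_i + c_i = m, e_i + a_i + c_i = m, and d_i + a_i + b_i = m; (3) for every i ∈ Fin (n^2), a_i + d_i + e_i + g_i = n − m, b_i + d_i + f_i + g_i = n − m, and c_i + e_i + f_i + g_i = n − m; (4) Σ_i a_i = Σ_i b_i = Σ_i c_i = m^2·(n − m), Σ_i d_i = Σ_i e_i = Σ_i f_i = m·(n − m)^2, and Σ_i g_i = (n − m)^3. -/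
private lemma sum_ind (k m c : ℕ) (hk : 0 < k) (hm : m ≤ k) :
    ∑ u ∈ Finset.range k, (if (c + u) % k < m then (1 : ℕ) else 0) = m := by
  have hc : c % k < k := Nat.mod_lt _ hk
  have hd : k * (c / k) + c % k = c := Nat.div_add_mod c k
  have hmul : k * (c / k + 1) = k * (c / k) + k := by ring
  have key : ∑ u ∈ Finset.range k, (if (c + u) % k < m then (1 : ℕ) else 0)
      = ∑ w ∈ Finset.range k, (if w < m then (1 : ℕ) else 0) := by
    refine Finset.sum_nbij' (fun u => (c + u) % k) (fun w => (w + (k - c % k)) % k)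
      ?_ ?_ ?_ ?_ ?_
    · intro u hu; exact Finset.mem_range.mpr (Nat.mod_lt _ hk)
    · intro w hw; exact Finset.mem_range.mpr (Nat.mod_lt _ hk)
    · intro u hu
      simp only [Finset.mem_range] at hu
      show ((c + u) % k + (k - c % k)) % k = u
      rw [Nat.mod_add_mod]
      have h3 : c + u + (k - c % k) = u + k * (c / k + 1) := by omega
      rw [h3, Nat.add_mul_mod_self_left, Nat.mod_eq_of_lt hu]
    · intro w hw
      simp only [Finset.mem_range] at hw
      show (c + (w + (k - c % k)) % k) % k = w
      rw [Nat.add_comm c, Nat.mod_add_mod]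
      have h3 : w + (k - c % k) + c = w + k * (c / k + 1) := by omega
      rw [h3, Nat.add_mul_mod_self_left, Nat.mod_eq_of_lt hw]
    · intro u hu; rfl
  rw [key, Finset.sum_boole]
  have : Finset.filter (fun w => w < m) (Finset.range k) = Finset.range m := by
    ext x; simp only [Finset.mem_filter, Finset.mem_range]; omega
  rw [this, Finset.card_range, Nat.cast_id]

private lemma sum_div_mod (k : ℕ) (H : ℕ → ℕ → ℕ) :
    ∑ j ∈ Finset.range (k * k), H (j / k) (j % k)
      = ∑ p ∈ Finset.range k, ∑ q ∈ Finset.range k, H p q := by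
  rcases Nat.eq_zero_or_pos k with rfl | hk
  · simp
  rw [← Finset.sum_product']
  refine Finset.sum_nbij' (fun j => (j / k, j % k)) (fun p => p.1 * k + p.2)
    ?_ ?_ ?_ ?_ ?_
  · intro j hj
    simp only [Finset.mem_range] at hj
    simp only [Finset.mem_product, Finset.mem_range]
    exact ⟨(Nat.div_lt_iff_lt_mul hk).mpr hj, Nat.mod_lt _ hk⟩
  · intro p hp
    simp only [Finset.mem_product, Finset.mem_range] at hp
    simp only [Finset.mem_range]
    have h1 : (p.1 + 1) * k ≤ k * k := mul_le_mul_left (by omega) k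
    have h2 : (p.1 + 1) * k = p.1 * k + k := by ring
    omega
  · intro j hj
    have h1 : k * (j / k) + j % k = j := Nat.div_add_mod j k
    have h2 : j / k * k = k * (j / k) := Nat.mul_comm _ _
    simp only
    omega
  · intro p hp
    simp only [Finset.mem_product, Finset.mem_range] at hp
    have h1 : (p.1 * k + p.2) / k = p.1 := by
      rw [Nat.add_comm, Nat.add_mul_div_right _ _ hk, Nat.div_eq_of_lt hp.2, Nat.zero_add]
    have h2 : (p.1 * k + p.2) % k = p.2 := by
      rw [Nat.add_comm, Nat.add_mul_mod_self_right, Nat.mod_eq_of_lt hp.2]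
    rw [h1, h2]
  · intro j hj; rfl

private def Tfun (k m j : ℕ) : ℕ :=
  ∑ u ∈ Finset.range k,
    (if (j / k + u) % k < m then (1 : ℕ) else 0) * (if (j % k + u) % k < m then (1 : ℕ) else 0)

private lemma Tfun_le (k m : ℕ) (hk : 0 < k) (hm : m ≤ k) (j : ℕ) : Tfun k m j ≤ m := by
  calc Tfun k m j ≤ ∑ u ∈ Finset.range k, (if (j / k + u) % k < m then (1 : ℕ) else 0) := by
        refine Finset.sum_le_sum fun u _ => ?_
        split_ifs <;> simp
    _ = m := sum_ind k m _ hk hm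

private lemma Tfun_ge (k m : ℕ) (hk : 0 < k) (hm : m ≤ k) (j : ℕ) :
    2 * m ≤ k + Tfun k m j := by
  have h1 : ∑ u ∈ Finset.range k,
      ((if (j / k + u) % k < m then (1 : ℕ) else 0) + (if (j % k + u) % k < m then (1 : ℕ) else 0))
      ≤ ∑ u ∈ Finset.range k,
      (1 + (if (j / k + u) % k < m then (1 : ℕ) else 0) * (if (j % k + u) % k < m then (1 : ℕ) else 0)) := by
    refine Finset.sum_le_sum fun u _ => ?_
    split_ifs <;> simp
  rw [Finset.sum_add_distrib, Finset.sum_add_distrib, sum_ind k m _ hk hm,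
    sum_ind k m _ hk hm, Finset.sum_const, Finset.card_range, smul_eq_mul, mul_one] at h1
  have h2 : Tfun k m j = ∑ u ∈ Finset.range k,
      (if (j / k + u) % k < m then (1 : ℕ) else 0) * (if (j % k + u) % k < m then (1 : ℕ) else 0) := rfl
  omega

private lemma Tfun_sum (k m : ℕ) (hk : 0 < k) (hm : m ≤ k) :
    ∑ j ∈ Finset.range (k * k), Tfun k m j = m * m * k := by
  have step : ∑ j ∈ Finset.range (k * k), Tfun k m j
      = ∑ p ∈ Finset.range k, ∑ q ∈ Finset.range k, ∑ u ∈ Finset.range k,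
          (if (p + u) % k < m then (1 : ℕ) else 0) * (if (q + u) % k < m then (1 : ℕ) else 0) :=
    sum_div_mod k (fun p q => ∑ u ∈ Finset.range k,
      (if (p + u) % k < m then (1 : ℕ) else 0) * (if (q + u) % k < m then (1 : ℕ) else 0))
  have col : ∀ u, ∑ q ∈ Finset.range k, (if (q + u) % k < m then (1 : ℕ) else 0) = m := by
    intro u
    have : ∀ q ∈ Finset.range k,
        (if (q + u) % k < m then (1 : ℕ) else 0) = (if (u + q) % k < m then (1 : ℕ) else 0) := by
      intro q _; rw [Nat.add_comm]
    rw [Finset.sum_congr rfl this, sum_ind k m u hk hm]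
  rw [step]
  calc ∑ p ∈ Finset.range k, ∑ q ∈ Finset.range k, ∑ u ∈ Finset.range k,
        (if (p + u) % k < m then (1 : ℕ) else 0) * (if (q + u) % k < m then (1 : ℕ) else 0)
      = ∑ p ∈ Finset.range k, ∑ u ∈ Finset.range k,
        (if (p + u) % k < m then (1 : ℕ) else 0) * m := by
        refine Finset.sum_congr rfl fun p _ => ?_
        rw [Finset.sum_comm]
        refine Finset.sum_congr rfl fun u _ => ?_
        rw [← Finset.mul_sum, col u]
    _ = ∑ p ∈ Finset.range k, m * m := by
        refine Finset.sum_congr rfl fun p _ => ?_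
        rw [← Finset.sum_mul, sum_ind k m p hk hm]
    _ = m * m * k := by rw [Finset.sum_const, Finset.card_range, smul_eq_mul]; ring

/-- For integers `m ≥ 2` and `n ≥ 2m`, there exist multiplicity functions
`a, b, c, d, e, f, g : Fin (n²) → ℕ` (for the seven edge types `αyz`, `βxz`,
`γxy`, `αβz`, `αγy`, `βγx`, `αβγ` of the amalgamated hypergraph) satisfying:
(1) for old colors `i < m²`: `aᵢ = bᵢ = cᵢ = dᵢ = eᵢ = fᵢ = 0` and `gᵢ = n - m`;
(2) for new colors `i ≥ m²`: `fᵢ + bᵢ + cᵢ = eᵢ + aᵢ + cᵢ = dᵢ + aᵢ + bᵢ = m`;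
(3) for all `i`: `aᵢ + dᵢ + eᵢ + gᵢ = bᵢ + dᵢ + fᵢ + gᵢ = cᵢ + eᵢ + fᵢ + gᵢ = n - m`;
(4) `Σ aᵢ = Σ bᵢ = Σ cᵢ = m²(n-m)`, `Σ dᵢ = Σ eᵢ = Σ fᵢ = m(n-m)²`, and
`Σ gᵢ = (n-m)³`. -/
theorem exists_amalgamated_coloring (m n : ℕ) (hm : 2 ≤ m) (hn : 2 * m ≤ n) :
    ∃ a b c d e f g : Fin (n ^ 2) → ℕ,
      (∀ i : Fin (n ^ 2), (i : ℕ) < m ^ 2 →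
        a i = 0 ∧ b i = 0 ∧ c i = 0 ∧ d i = 0 ∧ e i = 0 ∧ f i = 0 ∧
          g i = n - m) ∧
      (∀ i : Fin (n ^ 2), m ^ 2 ≤ (i : ℕ) →
        f i + b i + c i = m ∧ e i + a i + c i = m ∧ d i + a i + b i = m) ∧
      (∀ i : Fin (n ^ 2),
        a i + d i + e i + g i = n - m ∧ b i + d i + f i + g i = n - m ∧
          c i + e i + f i + g i = n - m) ∧
      ((∑ i, a i = m ^ 2 * (n - m) ∧ ∑ i, b i = m ^ 2 * (n - m) ∧
          ∑ i, c i = m ^ 2 * (n - m)) ∧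
        (∑ i, d i = m * (n - m) ^ 2 ∧ ∑ i, e i = m * (n - m) ^ 2 ∧
          ∑ i, f i = m * (n - m) ^ 2) ∧
        ∑ i, g i = (n - m) ^ 3) := by
  set k := n - m with hkdef
  have hk0 : 0 < k := by omega
  have hmk : m ≤ k := by omega
  have hn2 : n ^ 2 = m ^ 2 + (m * k + (m * k + k * k)) := by
    have hn' : n = m + k := by omega
    rw [hn']; ring
  have main : ∀ (F : ℕ → ℕ) (c0 c1 c2 : ℕ) (H : ℕ → ℕ),
      (∀ v, v < m ^ 2 → F v = c0) →
      (∀ v, v < m * k → F (m ^ 2 + v) = c1) →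
      (∀ v, v < m * k → F (m ^ 2 + (m * k + v)) = c2) →
      (∀ v, v < k * k → F (m ^ 2 + (m * k + (m * k + v))) = H v) →
      ∑ v ∈ Finset.range (n ^ 2), F v
        = m ^ 2 * c0 + m * k * c1 + m * k * c2 + ∑ v ∈ Finset.range (k * k), H v := by
    intro F c0 c1 c2 H h0 h1 h2 h3
    rw [hn2, Finset.sum_range_add, Finset.sum_range_add, Finset.sum_range_add]
    have e0 : ∑ v ∈ Finset.range (m ^ 2), F v = m ^ 2 * c0 := by
      rw [Finset.sum_congr rfl fun v hv => h0 v (Finset.mem_range.mp hv),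
        Finset.sum_const, Finset.card_range, smul_eq_mul]
    have e1 : ∑ v ∈ Finset.range (m * k), F (m ^ 2 + v) = m * k * c1 := by
      rw [Finset.sum_congr rfl fun v hv => h1 v (Finset.mem_range.mp hv),
        Finset.sum_const, Finset.card_range, smul_eq_mul]
    have e2 : ∑ v ∈ Finset.range (m * k), F (m ^ 2 + (m * k + v)) = m * k * c2 := by
      rw [Finset.sum_congr rfl fun v hv => h2 v (Finset.mem_range.mp hv),
        Finset.sum_const, Finset.card_range, smul_eq_mul]
    have e3 : ∑ v ∈ Finset.range (k * k), F (m ^ 2 + (m * k + (m * k + v)))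
        = ∑ v ∈ Finset.range (k * k), H v :=
      Finset.sum_congr rfl fun v hv => h3 v (Finset.mem_range.mp hv)
    rw [e0, e1, e2, e3]
    omega
  refine ⟨
    fun i => if (i : ℕ) < m ^ 2 + m * k + m * k then 0
      else Tfun k m ((i : ℕ) - (m ^ 2 + m * k + m * k)),
    fun i => if (i : ℕ) < m ^ 2 + m * k then 0
      else if (i : ℕ) < m ^ 2 + m * k + m * k then m else 0,
    fun i => if (i : ℕ) < m ^ 2 then 0 else if (i : ℕ) < m ^ 2 + m * k then m else 0,
    fun i => if (i : ℕ) < m ^ 2 then 0 else if (i : ℕ) < m ^ 2 + m * k then m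
      else if (i : ℕ) < m ^ 2 + m * k + m * k then 0
      else m - Tfun k m ((i : ℕ) - (m ^ 2 + m * k + m * k)),
    fun i => if (i : ℕ) < m ^ 2 + m * k then 0
      else if (i : ℕ) < m ^ 2 + m * k + m * k then m
      else m - Tfun k m ((i : ℕ) - (m ^ 2 + m * k + m * k)),
    fun i => if (i : ℕ) < m ^ 2 + m * k + m * k then 0 else m,
    fun i => if (i : ℕ) < m ^ 2 then k
      else if (i : ℕ) < m ^ 2 + m * k + m * k then k - m
      else (k + Tfun k m ((i : ℕ) - (m ^ 2 + m * k + m * k))) - 2 * m,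
    ?_, ?_, ?_, ?_⟩
  · intro i hi
    refine ⟨?_, ?_, ?_, ?_, ?_, ?_, ?_⟩ <;> · simp only []; split_ifs <;> omega
  · intro i hi
    have h1 := Tfun_le k m hk0 hmk ((i : ℕ) - (m ^ 2 + m * k + m * k))
    have h2 := Tfun_ge k m hk0 hmk ((i : ℕ) - (m ^ 2 + m * k + m * k))
    refine ⟨?_, ?_, ?_⟩ <;> · simp only []; split_ifs <;> omega
  · intro i
    have h1 := Tfun_le k m hk0 hmk ((i : ℕ) - (m ^ 2 + m * k + m * k))
    have h2 := Tfun_ge k m hk0 hmk ((i : ℕ) - (m ^ 2 + m * k + m * k))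
    refine ⟨?_, ?_, ?_⟩ <;> · simp only []; split_ifs <;> omega
  · have hTs := Tfun_sum k m hk0 hmk
    have hsub : ∑ v ∈ Finset.range (k * k), (m - Tfun k m v) + m * m * k = k * k * m := by
      have h1 : ∑ v ∈ Finset.range (k * k), ((m - Tfun k m v) + Tfun k m v)
          = ∑ v ∈ Finset.range (k * k), m :=
        Finset.sum_congr rfl fun v _ => by have := Tfun_le k m hk0 hmk v; omega
      rw [Finset.sum_add_distrib, Finset.sum_const, Finset.card_range, smul_eq_mul, hTs] at h1
      omega
    have hgsub : ∑ v ∈ Finset.range (k * k), ((k + Tfun k m v) - 2 * m) + k * k * (2 * m)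
        = k * k * k + m * m * k := by
      have h1 : ∑ v ∈ Finset.range (k * k), (((k + Tfun k m v) - 2 * m) + 2 * m)
          = ∑ v ∈ Finset.range (k * k), (k + Tfun k m v) :=
        Finset.sum_congr rfl fun v _ => by have := Tfun_ge k m hk0 hmk v; omega
      rw [Finset.sum_add_distrib, Finset.sum_add_distrib, Finset.sum_const, Finset.sum_const,
        Finset.card_range, smul_eq_mul, smul_eq_mul, hTs] at h1
      omega
    refine ⟨⟨?_, ?_, ?_⟩, ⟨?_, ?_, ?_⟩, ?_⟩
    · -- a
      refine (Fin.sum_univ_eq_sum_range (fun v => if v < m ^ 2 + m * k + m * k then 0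
        else Tfun k m (v - (m ^ 2 + m * k + m * k))) (n ^ 2)).trans ?_
      rw [main _ 0 0 0 (Tfun k m)
        (fun v hv => by split_ifs <;> first | rfl | omega)
        (fun v hv => by split_ifs <;> first | rfl | omega)
        (fun v hv => by split_ifs <;> first | rfl | omega)
        (fun v hv => by
          split_ifs with h
          · omega
          · have : m ^ 2 + (m * k + (m * k + v)) - (m ^ 2 + m * k + m * k) = v := by omega
            rw [this]), hTs]
      have r : m * m * k = m ^ 2 * k := by ring
      omega
    · -- b
      refine (Fin.sum_univ_eq_sum_range (fun v => if v < m ^ 2 + m * k then 0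
        else if v < m ^ 2 + m * k + m * k then m else 0) (n ^ 2)).trans ?_
      rw [main _ 0 0 m (fun _ => 0)
        (fun v hv => by split_ifs <;> first | rfl | omega)
        (fun v hv => by split_ifs <;> first | rfl | omega)
        (fun v hv => by split_ifs <;> first | rfl | omega)
        (fun v hv => by split_ifs <;> first | rfl | omega), Finset.sum_const_zero]
      have r : m * k * m = m ^ 2 * k := by ring
      omega
    · -- c
      refine (Fin.sum_univ_eq_sum_range (fun v => if v < m ^ 2 then 0
        else if v < m ^ 2 + m * k then m else 0) (n ^ 2)).trans ?_
      rw [main _ 0 m 0 (fun _ => 0)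
        (fun v hv => by split_ifs <;> first | rfl | omega)
        (fun v hv => by split_ifs <;> first | rfl | omega)
        (fun v hv => by split_ifs <;> first | rfl | omega)
        (fun v hv => by split_ifs <;> first | rfl | omega), Finset.sum_const_zero]
      have r : m * k * m = m ^ 2 * k := by ring
      omega
    · -- d
      refine (Fin.sum_univ_eq_sum_range (fun v => if v < m ^ 2 then 0
        else if v < m ^ 2 + m * k then m
        else if v < m ^ 2 + m * k + m * k then 0
        else m - Tfun k m (v - (m ^ 2 + m * k + m * k))) (n ^ 2)).trans ?_
      rw [main _ 0 m 0 (fun v => m - Tfun k m v)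
        (fun v hv => by split_ifs <;> first | rfl | omega)
        (fun v hv => by split_ifs <;> first | rfl | omega)
        (fun v hv => by split_ifs <;> first | rfl | omega)
        (fun v hv => by
          split_ifs with h1 h2 h3
          · omega
          · omega
          · omega
          · have : m ^ 2 + (m * k + (m * k + v)) - (m ^ 2 + m * k + m * k) = v := by omega
            rw [this])]
      have r : m * k * m + k * k * m = m * k ^ 2 + m * m * k := by ring
      omega
    · -- e
      refine (Fin.sum_univ_eq_sum_range (fun v => if v < m ^ 2 + m * k then 0
        else if v < m ^ 2 + m * k + m * k then m
        else m - Tfun k m (v - (m ^ 2 + m * k + m * k))) (n ^ 2)).trans ?_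
      rw [main _ 0 0 m (fun v => m - Tfun k m v)
        (fun v hv => by split_ifs <;> first | rfl | omega)
        (fun v hv => by split_ifs <;> first | rfl | omega)
        (fun v hv => by split_ifs <;> first | rfl | omega)
        (fun v hv => by
          split_ifs with h1 h2
          · omega
          · omega
          · have : m ^ 2 + (m * k + (m * k + v)) - (m ^ 2 + m * k + m * k) = v := by omega
            rw [this])]
      have r : m * k * m + k * k * m = m * k ^ 2 + m * m * k := by ring
      omega
    · -- f
      refine (Fin.sum_univ_eq_sum_range (fun v => if v < m ^ 2 + m * k + m * k then 0 else m)
        (n ^ 2)).trans ?_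
      rw [main _ 0 0 0 (fun _ => m)
        (fun v hv => by split_ifs <;> first | rfl | omega)
        (fun v hv => by split_ifs <;> first | rfl | omega)
        (fun v hv => by split_ifs <;> first | rfl | omega)
        (fun v hv => by split_ifs <;> first | rfl | omega),
        Finset.sum_const, Finset.card_range, smul_eq_mul]
      have r : k * k * m = m * k ^ 2 := by ring
      omega
    · -- g
      refine (Fin.sum_univ_eq_sum_range (fun v => if v < m ^ 2 then k
        else if v < m ^ 2 + m * k + m * k then k - m
        else (k + Tfun k m (v - (m ^ 2 + m * k + m * k))) - 2 * m) (n ^ 2)).trans ?_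
      rw [main _ k (k - m) (k - m) (fun v => (k + Tfun k m v) - 2 * m)
        (fun v hv => by split_ifs <;> first | rfl | omega)
        (fun v hv => by split_ifs <;> first | rfl | omega)
        (fun v hv => by split_ifs <;> first | rfl | omega)
        (fun v hv => by
          split_ifs with h1 h2
          · omega
          · omega
          · have : m ^ 2 + (m * k + (m * k + v)) - (m ^ 2 + m * k + m * k) = v := by omega
            rw [this])]
      have hw : m * k * (k - m) + m * k * m = m * k * k := by
        rw [← Nat.mul_add]
        congr 1
        omega
      have r2 : m ^ 2 * k = m * m * k := by ring
      have r3 : k ^ 3 = k * k * k := by ring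
      have r6 : m * k * m = m * m * k := by ring
      have r5 : m * k * k = k * k * m := by ring
      have r7 : k * k * (2 * m) = k * k * m + k * k * m := by ring
      omega
end

section
/- Let m ≥ 2 and j ∈ {0, 1, 2} be integers, and let n = 2m + j satisfy n ≡ 2 (mod 3). Set a = ⌈m − n/3⌉ = (3m − n + 2)/3 and K = n^2 − m^2. Then K ≡ 0 (mod 3) if j ∈ {0, 1} and K ≡ 1 (mod 3) if j = 2; moreover, if j ∈ {0, 1} then (K/3)·(3a − 2) ≤ (n − m)·m^2 < K·a, and if j = 2 then ((K − 1)/3)·(3a − 2) + a ≤ (n − m)·m^2 < K·a. -/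
/-- Case `n ≡ 2 (mod 3)` of the coloring counts: for integers `m ≥ 2`,
`j ∈ {0, 1, 2}`, `n = 2m + j` with `n ≡ 2 (mod 3)`, `a = ⌈m - n/3⌉ = (3m-n+2)/3`
and `K = n² - m²`, one has `K ≡ 0 (mod 3)` if `j ∈ {0, 1}` and `K ≡ 1 (mod 3)`
if `j = 2`; moreover `(K/3)(3a-2) ≤ (n-m)m² < Ka` if `j ∈ {0, 1}`, and
`((K-1)/3)(3a-2) + a ≤ (n-m)m² < Ka` if `j = 2`. -/
theorem counts_case_two (m j n a K : ℤ) (hm : 2 ≤ m) (hj : j = 0 ∨ j = 1 ∨ j = 2)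
    (hn : n = 2 * m + j) (hmod : n ≡ 2 [ZMOD 3])
    (ha : a = (3 * m - n + 2) / 3) (ha' : a = ⌈(m : ℚ) - (n : ℚ) / 3⌉)
    (hK : K = n ^ 2 - m ^ 2) :
    ((j = 0 ∨ j = 1) → K ≡ 0 [ZMOD 3]) ∧
    (j = 2 → K ≡ 1 [ZMOD 3]) ∧
    ((j = 0 ∨ j = 1) →
      (K / 3) * (3 * a - 2) ≤ (n - m) * m ^ 2 ∧ (n - m) * m ^ 2 < K * a) ∧
    (j = 2 →
      ((K - 1) / 3) * (3 * a - 2) + a ≤ (n - m) * m ^ 2 ∧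
        (n - m) * m ^ 2 < K * a) := by
  subst hn
  have hmod' : (2 * m + j) % 3 = 2 % 3 := hmod
  rcases hj with rfl | rfl | rfl
  · -- j = 0, m ≡ 1 (mod 3)
    obtain ⟨t, rfl⟩ : ∃ t, m = 3 * t + 1 := ⟨(m - 1) / 3, by omega⟩
    have ht : 1 ≤ t := by omega
    have haa : a = t + 1 := by omega
    have hq : K = 3 * (3 * t + 1) ^ 2 := by rw [hK]; ring
    have hK3 : K / 3 = (3 * t + 1) ^ 2 := by omega
    refine ⟨fun _ => ?_, fun h => by simp at h, fun _ => ⟨?_, ?_⟩, fun h => by simp at h⟩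
    · show K % 3 = 0 % 3; omega
    · rw [hK3, haa]; nlinarith [sq_nonneg t]
    · rw [hq, haa]; nlinarith [sq_nonneg t]
  · -- j = 1, m ≡ 2 (mod 3)
    obtain ⟨t, rfl⟩ : ∃ t, m = 3 * t + 2 := ⟨(m - 2) / 3, by omega⟩
    have ht : 0 ≤ t := by omega
    have haa : a = t + 1 := by omega
    have hq : K = 3 * ((9 * t + 7) * (t + 1)) := by rw [hK]; ring
    have hK3 : K / 3 = (9 * t + 7) * (t + 1) := by omega
    refine ⟨fun _ => ?_, fun h => by simp at h, fun _ => ⟨?_, ?_⟩, fun h => by simp at h⟩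
    · show K % 3 = 0 % 3; omega
    · rw [hK3, haa]; nlinarith [sq_nonneg t]
    · rw [hq, haa]; nlinarith [sq_nonneg t]
  · -- j = 2, m ≡ 0 (mod 3)
    obtain ⟨t, rfl⟩ : ∃ t, m = 3 * t := ⟨m / 3, by omega⟩
    have ht : 1 ≤ t := by omega
    have haa : a = t := by omega
    have hq : K = 3 * (9 * t ^ 2 + 8 * t + 1) + 1 := by rw [hK]; ring
    have hK3 : (K - 1) / 3 = 9 * t ^ 2 + 8 * t + 1 := by omega
    refine ⟨fun h => by simp at h, fun _ => ?_, fun h => by simp at h, fun _ => ⟨?_, ?_⟩⟩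
    · show K % 3 = 1 % 3; omega
    · rw [hK3, haa]; nlinarith [sq_nonneg t]
    · rw [hq, haa]; nlinarith [sq_nonneg t]
end
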